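/- Let f : ℝⁿ → (−∞,+∞] be an absolutely symmetric function and X ∈ M_{m,n} with f(σ(X)) finite. Then for every v ∈ ℝⁿ and every signed permutation matrix Q± in the stabilizer class P^n_±(X) (block-diagonal with respect to the groups of equal singular values of X, with the zero block allowed arbitrary signs), the subderivative satisfies df(σ(X))(Q± v) = df(σ(X))(v). -/

import Mathlib

open Filter Topology Matrix

noncomputable section

abbrev Mat (m n : ℕ) := Matrix (Fin m) (Fin n) ℝ

namespace Paper

/-- Frobenius (trace) inner product on real matrices. -/
def finner {m n : ℕ} (X Y : Mat m n) : ℝ := ∑ i, ∑ j, X i j * Y i j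

/-- Frobenius norm. -/
def fnorm {m n : ℕ} (X : Mat m n) : ℝ := Real.sqrt (finner X X)

/-- Euclidean inner product on `ℝⁿ`. -/
def vinner {n : ℕ} (x y : Fin n → ℝ) : ℝ := ∑ i, x i * y i

/-- Euclidean norm on `ℝⁿ`. -/
def vnorm {n : ℕ} (x : Fin n → ℝ) : ℝ := Real.sqrt (vinner x x)

/-- Eigenvalues of a real symmetric matrix, arranged in nonincreasing order. -/
def eigs {k : ℕ} (A : Matrix (Fin k) (Fin k) ℝ) (hA : A.IsHermitian) : Fin k → ℝ :=
  fun i => hA.eigenvalues (Tuple.sort (fun j => -(hA.eigenvalues j)) i)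

/-- Singular values of a real `m × n` matrix, arranged in nonincreasing order. -/
def svals {m n : ℕ} (X : Mat m n) : Fin n → ℝ :=
  fun i => Real.sqrt (eigs (Xᵀ * X) (by simpa using Matrix.isHermitian_conjTranspose_mul_self X) i)

/-- The `m × n` matrix with `x` on the diagonal and zeros elsewhere. -/
def mdiag {m n : ℕ} (x : Fin n → ℝ) : Mat m n :=
  fun i j => if (i : ℕ) = (j : ℕ) then x j else 0

/-- The symmetric block matrix `B(X) = [[0, X], [Xᵀ, 0]]`, reindexed over `Fin (m+n)`. -/
def bmat {m n : ℕ} (X : Mat m n) : Matrix (Fin (m + n)) (Fin (m + n)) ℝ :=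
  Matrix.reindex finSumFinEquiv finSumFinEquiv (Matrix.fromBlocks 0 X Xᵀ 0)

lemma bmat_isHermitian {m n : ℕ} (X : Mat m n) : (bmat X).IsHermitian := by
  rw [Matrix.IsHermitian]
  ext i j
  simp only [bmat, Matrix.conjTranspose_apply, Matrix.reindex_apply, Matrix.submatrix_apply,
    star_trivial]
  rcases hi : finSumFinEquiv.symm i with a | a <;> rcases hj : finSumFinEquiv.symm j with b | b <;>
    simp [Matrix.fromBlocks, Matrix.transpose_apply]

/-- Eigenvalues of `B(X)` in nonincreasing order. -/
def beigs {m n : ℕ} (X : Mat m n) : Fin (m + n) → ℝ :=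
  eigs (bmat X) (bmat_isHermitian X)

/-- `Q` is a signed permutation matrix. -/
def IsSignedPerm {n : ℕ} (Q : Matrix (Fin n) (Fin n) ℝ) : Prop :=
  ∃ (e : Equiv.Perm (Fin n)) (s : Fin n → ℝ), (∀ i, s i = 1 ∨ s i = -1) ∧
    ∀ i j, Q i j = if j = e i then s i else 0

/-- A set of vectors invariant under all signed permutations. -/
def AbsSymSet {n : ℕ} (K : Set (Fin n → ℝ)) : Prop :=
  ∀ Q, IsSignedPerm Q → ∀ x ∈ K, Q.mulVec x ∈ K

/-- An extended-real-valued absolutely symmetric function. -/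
def AbsSymFun {n : ℕ} (f : (Fin n → ℝ) → EReal) : Prop :=
  ∀ Q, IsSignedPerm Q → ∀ x, f (Q.mulVec x) = f x

/-- Euclidean distance from a point to a set in `ℝⁿ`. -/
def vdist {n : ℕ} (x : Fin n → ℝ) (K : Set (Fin n → ℝ)) : ℝ :=
  sInf ((fun y => vnorm (x - y)) '' K)

/-- Frobenius distance from a matrix to a set of matrices. -/
def mdist {m n : ℕ} (X : Mat m n) (Γ : Set (Mat m n)) : ℝ :=
  sInf ((fun Y => fnorm (X - Y)) '' Γ)

section Variational

variable {E : Type*} [AddCommGroup E] [Module ℝ E] [TopologicalSpace E]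

/-- The subderivative `dg(x)(w) = liminf_{t↓0, w'→w} (g(x+tw') - g(x))/t`. -/
def subderiv (g : E → EReal) (x w : E) : EReal :=
  liminf (fun p : ℝ × E => ((p.1⁻¹ : ℝ) : EReal) * (g (x + p.1 • p.2) - g x))
    ((𝓝[>] (0 : ℝ)) ×ˢ 𝓝 w)

/-- The second-order difference quotient `Δ²_τ g(x | v)(w)`. -/
def secondQuot (ip : E → E → ℝ) (g : E → EReal) (x v : E) (τ : ℝ) (w : E) : EReal :=
  ((2 / τ ^ 2 : ℝ) : EReal) * (g (x + τ • w) - g x - ((τ * ip v w : ℝ) : EReal))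

/-- The second subderivative `d²g(x | v)(w)`. -/
def secondSubderiv (ip : E → E → ℝ) (g : E → EReal) (x v w : E) : EReal :=
  liminf (fun p : ℝ × E => secondQuot ip g x v p.1 p.2) ((𝓝[>] (0 : ℝ)) ×ˢ 𝓝 w)

/-- The parabolic difference quotient `Δ²_τ g(x)(w | z)`. -/
def parabQuot (g : E → EReal) (x w : E) (τ : ℝ) (z : E) : EReal :=
  ((2 / τ ^ 2 : ℝ) : EReal) *
    (g (x + τ • w + (τ ^ 2 / 2) • z) - g x - ((τ : ℝ) : EReal) * subderiv g x w)

/-- The parabolic subderivative `d²g(x)(w | z)`. -/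
def parabolicSubderiv (g : E → EReal) (x w z : E) : EReal :=
  liminf (fun p : ℝ × E => parabQuot g x w p.1 p.2) ((𝓝[>] (0 : ℝ)) ×ˢ 𝓝 z)

/-- Parabolic epi-differentiability of `g` at `x` for `w`. -/
def ParabEpiDiffAt (g : E → EReal) (x w : E) : Prop :=
  (∃ z, parabolicSubderiv g x w z < ⊤) ∧
  ∀ z : E, ∀ t : ℕ → ℝ, (∀ k, 0 < t k) → Tendsto t atTop (𝓝 0) →
    ∃ zk : ℕ → E, Tendsto zk atTop (𝓝 z) ∧
      Tendsto (fun k => parabQuot g x w (t k) (zk k)) atTop (𝓝 (parabolicSubderiv g x w z))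

/-- The (contingent) tangent cone to `C` at `x`. -/
def tangentConeOf (C : Set E) (x : E) : Set E :=
  {w | ∃ t : ℕ → ℝ, ∃ w' : ℕ → E, (∀ k, 0 < t k) ∧ Tendsto t atTop (𝓝 0) ∧
    Tendsto w' atTop (𝓝 w) ∧ ∀ k, x + t k • w' k ∈ C}

/-- The second-order tangent set to `C` at `x` for `w`. -/
def tangentCone2Of (C : Set E) (x w : E) : Set E :=
  {u | ∃ t : ℕ → ℝ, ∃ u' : ℕ → E, (∀ k, 0 < t k) ∧ Tendsto t atTop (𝓝 0) ∧
    Tendsto u' atTop (𝓝 u) ∧ ∀ k, x + t k • w + (t k ^ 2 / 2) • u' k ∈ C}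

/-- Parabolic derivability of the set `C` at `x` for `w`. -/
def ParabolicallyDerivable (C : Set E) (x w : E) : Prop :=
  (tangentCone2Of C x w).Nonempty ∧
  ∀ u ∈ tangentCone2Of C x w, ∃ ε > (0 : ℝ), ∃ ξ : ℝ → E,
    (∀ t ∈ Set.Icc (0 : ℝ) ε, ξ t ∈ C) ∧ ξ 0 = x ∧
    Tendsto (fun t : ℝ => t⁻¹ • (ξ t - x)) (𝓝[>] 0) (𝓝 w) ∧
    Tendsto (fun t : ℝ => (2 / t ^ 2) • (ξ t - x - t • w)) (𝓝[>] 0) (𝓝 u)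

/-- The convex subdifferential of `g` at `x` (w.r.t. the pairing `ip`). -/
def convSubdiff (ip : E → E → ℝ) (g : E → EReal) (x : E) : Set E :=
  {v | ∀ y, ((ip v (y - x) : ℝ) : EReal) + g x ≤ g y}

/-- Convexity for extended-real-valued functions. -/
def ConvexEReal (g : E → EReal) : Prop :=
  ∀ x y : E, ∀ t : ℝ, 0 ≤ t → t ≤ 1 →
    g (t • x + (1 - t) • y) ≤ ((t : ℝ) : EReal) * g x + ((1 - t : ℝ) : EReal) * g y

end Variational

/-- Local Lipschitz continuity of `f` relative to its domain (everywhere on the domain). -/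
def LocLipRelDom {n : ℕ} (f : (Fin n → ℝ) → EReal) : Prop :=
  ∀ x, f x ≠ ⊤ → ∃ l ≥ (0 : ℝ), ∃ U ∈ 𝓝 x, ∀ y ∈ U, ∀ z ∈ U, f y ≠ ⊤ → f z ≠ ⊤ →
    |(f y).toReal - (f z).toReal| ≤ l * vnorm (y - z)

/-- The columns of `U` with indices `r, r+1, …, k-1`. -/
def colsFrom {k : ℕ} (r : ℕ) (U : Matrix (Fin k) (Fin k) ℝ) :
    Matrix (Fin k) (Fin (k - r)) ℝ :=
  fun i j => U i ⟨r + (j : ℕ), by have := j.isLt; omega⟩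

/-- The first `r` columns of `U`. -/
def firstCols {k : ℕ} (r : ℕ) (h : r ≤ k) (U : Matrix (Fin k) (Fin k) ℝ) :
    Matrix (Fin k) (Fin r) ℝ :=
  fun i j => U i (Fin.castLE h j)

/-- The submatrix of `M` with rows `a ≤ · < b` and columns `c ≤ · < d`. -/
def subBlock {p q : ℕ} (M : Matrix (Fin p) (Fin q) ℝ) (a b c d : ℕ)
    (h1 : b ≤ p) (h2 : d ≤ q) : Matrix (Fin (b - a)) (Fin (d - c)) ℝ :=
  fun i j => M ⟨a + (i : ℕ), by have := i.isLt; omega⟩ ⟨c + (j : ℕ), by have := j.isLt; omega⟩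

/-- Nuclear norm: the sum of all singular values. -/
def nucNorm {m n : ℕ} (A : Mat m n) : ℝ := ∑ j, svals A j

/-- `Ψₙ(X) = σ_{r+1}(X) + ⋯ + σ_n(X)`, the sum of the `n - r` smallest singular values. -/
def psiN {m n : ℕ} (r : ℕ) (X : Mat m n) : ℝ :=
  ∑ s : Fin n, if r ≤ (s : ℕ) then svals X s else 0

/-- The regular (Fréchet) subdifferential of a real-valued function on matrices. -/
def regSubdiff {m n : ℕ} (g : Mat m n → ℝ) (X : Mat m n) : Set (Mat m n) :=
  {V | ∀ ε > (0 : ℝ), ∀ᶠ Y in 𝓝 X, g X + finner V (Y - X) - ε * fnorm (Y - X) ≤ g Y}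

/-- Two square matrices admit a simultaneous ordered spectral decomposition. -/
def SimSpec {k : ℕ} (A B : Matrix (Fin k) (Fin k) ℝ) : Prop :=
  ∃ (W : Matrix (Fin k) (Fin k) ℝ) (a b : Fin k → ℝ), Wᵀ * W = 1 ∧
    Antitone a ∧ Antitone b ∧
    A = W * Matrix.diagonal a * Wᵀ ∧ B = W * Matrix.diagonal b * Wᵀ

/-- Two rectangular matrices admit a simultaneous ordered singular value decomposition. -/
def SimSVD {p q : ℕ} (A B : Matrix (Fin p) (Fin q) ℝ) : Prop :=
  ∃ (U : Matrix (Fin p) (Fin p) ℝ) (V : Matrix (Fin q) (Fin q) ℝ)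
    (a b : Fin q → ℝ), Uᵀ * U = 1 ∧ Vᵀ * V = 1 ∧
    Antitone a ∧ Antitone b ∧ (∀ j, 0 ≤ a j) ∧ (∀ j, 0 ≤ b j) ∧
    A = U * (mdiag a : Matrix (Fin p) (Fin q) ℝ) * Vᵀ ∧ B = U * (mdiag b : Matrix (Fin p) (Fin q) ℝ) * Vᵀ

end Paper

/-!
A signed permutation `Q` fixing `σ(X)` is a linear homeomorphism of `ℝⁿ` that fixes the base
point and leaves `f` invariant. Such a map only reparametrises the liminf defining
`df(σ(X))`: the difference quotient at `(t, w')` equals the one at `(t, Q w')`, and `w' → v`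
exactly when `Q w' → Q v`.
-/

namespace Paper

theorem subderiv_map_continuousLinearEquiv {E : Type*} [AddCommGroup E] [Module ℝ E]
    [TopologicalSpace E] {g : E → EReal} {x : E} (T : E ≃L[ℝ] E) (hg : ∀ y, g (T y) = g y)
    (hx : T x = x) (w : E) : subderiv g x (T w) = subderiv g x w := by
  unfold subderiv
  rw [← T.map_nhds_eq, prod_map_right, ← liminf_comp]
  congr 1
  funext p
  simp only [Function.comp, Prod.map, id]
  rw [← hx, ← T.map_smul, ← T.map_add, hg, hx]

theorem IsSignedPerm.mulVec_injective {n : ℕ} {Q : Matrix (Fin n) (Fin n) ℝ}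
    (hQ : IsSignedPerm Q) : Function.Injective Q.mulVec := by
  obtain ⟨e, s, hs, hQe⟩ := hQ
  have hmulVec : ∀ y : Fin n → ℝ, ∀ i, Q.mulVec y i = s i * y (e i) := fun y i => by
    simp [Matrix.mulVec, dotProduct, hQe, ite_mul]
  intro y z hyz
  funext j
  obtain ⟨i, rfl⟩ := e.surjective j
  have hsi : s i ≠ 0 := by rcases hs i with h | h <;> simp [h]
  exact mul_left_cancel₀ hsi (by rw [← hmulVec, ← hmulVec, hyz])

noncomputable def IsSignedPerm.toContinuousLinearEquiv {n : ℕ} {Q : Matrix (Fin n) (Fin n) ℝ}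
    (hQ : IsSignedPerm Q) : (Fin n → ℝ) ≃L[ℝ] (Fin n → ℝ) :=
  (LinearEquiv.ofInjectiveEndo Q.mulVecLin hQ.mulVec_injective).toContinuousLinearEquiv

@[simp]
theorem IsSignedPerm.toContinuousLinearEquiv_apply {n : ℕ} {Q : Matrix (Fin n) (Fin n) ℝ}
    (hQ : IsSignedPerm Q) (y : Fin n → ℝ) : hQ.toContinuousLinearEquiv y = Q.mulVec y :=
  rfl

end Paper

open Paper

theorem stmt6_general {m n : ℕ} (f : (Fin n → ℝ) → EReal)
    (habs : AbsSymFun f) (X : Mat m n)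
    (Q : Matrix (Fin n) (Fin n) ℝ) (hQ : IsSignedPerm Q)
    (hQX : Q.mulVec (svals X) = svals X) (v : Fin n → ℝ) :
    subderiv f (svals X) (Q.mulVec v) = subderiv f (svals X) v := by
  simpa using subderiv_map_continuousLinearEquiv hQ.toContinuousLinearEquiv
    (by simpa using habs Q hQ) (by simpa using hQX) v

/-- The subderivative of an absolutely symmetric function `f` at `σ(X)` is symmetric
with respect to the signed permutation matrices stabilizing `σ(X)`
(the class `𝐏ⁿ_±(X)` of block-diagonal signed permutations). -/
theorem stmt6 {m n : ℕ} (hmn : n ≤ m) (f : (Fin n → ℝ) → EReal)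
    (habs : AbsSymFun f) (X : Mat m n)
    (hfin : f (svals X) ≠ ⊤ ∧ f (svals X) ≠ ⊥)
    (Q : Matrix (Fin n) (Fin n) ℝ) (hQ : IsSignedPerm Q)
    (hQX : Q.mulVec (svals X) = svals X) (v : Fin n → ℝ) :
    subderiv f (svals X) (Q.mulVec v) = subderiv f (svals X) v :=
  stmt6_general f habs X Q hQ hQX v
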